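/- Let M ≥ 1 and N ≥ 0 be integers. For each j ∈ {1,…,M} let α_j ∈ (0,1) and let w_j > 0 be real weights, and set Q = (Σ_{j=1}^M w_j)^{−1}. Define a_l^α = (l+1)^{1−α} − l^{1−α} for integers l ≥ 0. Suppose x_0, x_1, …, x_N are nonnegative real numbers satisfying, for every 1 ≤ n ≤ N, x_n ≤ Q Σ_{j=1}^M w_j [ Σ_{l=1}^{n−1} (a_{n−l−1}^{α_j} − a_{n−l}^{α_j}) x_l + a_{n−1}^{α_j} x_0 ]. Then x_n ≤ x_0 for every 0 ≤ n ≤ N. -/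

import Mathlib

/-!
Each inner bracket is a convex combination of `x 0, …, x (n-1)`: the coefficients
`a_{n-l-1} - a_{n-l}` are nonnegative because `t ↦ t ^ (1 - α)` is concave, and together with
`a_{n-1}` they telescope to `a_0 = 1`. The outer sum is a weighted mean over `j`. Hence by strong
induction `x n` is bounded by a mean of earlier values, all of which are at most `x 0`.
-/

/-- The L1-scheme coefficients `a_l^α = (l+1)^{1-α} - l^{1-α}`. -/
noncomputable def aL1 (α : ℝ) (l : ℕ) : ℝ :=
  ((l : ℝ) + 1) ^ (1 - α) - (l : ℝ) ^ (1 - α)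

open Finset

lemma ConcaveOn.antitone_succ_sub {f : ℝ → ℝ} (hf : ConcaveOn ℝ (Set.Ici 0) f) :
    Antitone fun l : ℕ => f (l + 1) - f l := by
  refine antitone_nat_of_succ_le fun l => ?_
  have h := hf.slope_anti_adjacent (x := l) (y := l + 1) (z := l + 2)
    (Set.mem_Ici.2 l.cast_nonneg) (Set.mem_Ici.2 (by positivity)) (by linarith) (by linarith)
  norm_num [add_assoc, one_add_one_eq_two] at h ⊢
  linarith

lemma aL1_antitone {α : ℝ} (h₀ : 0 ≤ α) (h₁ : α ≤ 1) : Antitone (aL1 α) :=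
  (Real.concaveOn_rpow (by linarith) (by linarith)).antitone_succ_sub

lemma aL1_zero {α : ℝ} (hα : α ≠ 1) : aL1 α 0 = 1 := by
  simp [aL1, Real.zero_rpow (sub_ne_zero.2 hα.symm)]

lemma sum_Icc_sub_reflect (a : ℕ → ℝ) (n : ℕ) :
    ∑ l ∈ Icc 1 (n - 1), (a (n - l - 1) - a (n - l)) = a 0 - a (n - 1) := by
  rw [← sum_range_sub' a]
  refine sum_nbij' (fun l => n - 1 - l) (fun i => n - 1 - i) ?_ ?_ ?_ ?_ ?_ <;>
    intro l hl <;> simp only [mem_Icc, mem_range] at hl ⊢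
  any_goals omega
  rw [show n - 1 - l = n - l - 1 by omega, show n - l - 1 + 1 = n - l by omega]

lemma l1_history_le {a : ℕ → ℝ} (ha : Antitone a) (ha₀ : a 0 = 1) {x : ℕ → ℝ} {n : ℕ}
    (hx : ∀ l ∈ Icc 1 (n - 1), x l ≤ x 0) :
    ∑ l ∈ Icc 1 (n - 1), (a (n - l - 1) - a (n - l)) * x l + a (n - 1) * x 0 ≤ x 0 := by
  have hsum : ∑ l ∈ Icc 1 (n - 1), (a (n - l - 1) - a (n - l)) * x l ≤
      ∑ l ∈ Icc 1 (n - 1), (a (n - l - 1) - a (n - l)) * x 0 :=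
    sum_le_sum fun l hl => mul_le_mul_of_nonneg_left (hx l hl) (sub_nonneg.2 (ha (by omega)))
  rw [← sum_mul, sum_Icc_sub_reflect, ha₀] at hsum
  linarith

theorem discrete_stability_induction_general
    (M N : ℕ) (hM : 1 ≤ M) (α w : ℕ → ℝ)
    (hα : ∀ j ∈ Finset.Icc 1 M, α j ∈ Set.Ioo (0 : ℝ) 1)
    (hw : ∀ j ∈ Finset.Icc 1 M, 0 < w j)
    (x : ℕ → ℝ)
    (hrec : ∀ n, 1 ≤ n → n ≤ N →
      x n ≤ (∑ j ∈ Finset.Icc 1 M, w j)⁻¹ *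
        ∑ j ∈ Finset.Icc 1 M, w j *
          ((∑ l ∈ Finset.Icc 1 (n - 1),
              (aL1 (α j) (n - l - 1) - aL1 (α j) (n - l)) * x l) +
            aL1 (α j) (n - 1) * x 0)) :
    ∀ n ≤ N, x n ≤ x 0 := by
  have hW : 0 < ∑ j ∈ Icc 1 M, w j := sum_pos hw ⟨1, by simp [hM]⟩
  intro n
  induction n using Nat.strong_induction_on with
  | _ n ih =>
    intro hn
    rcases Nat.eq_zero_or_pos n with rfl | hn₀
    · rfl
    refine (hrec n hn₀ hn).trans ?_
    -- the right-hand side of `hrec` is `(Icc 1 M).centerMass w _` unfolded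
    refine (convex_Iic (x 0)).centerMass_mem (fun j hj => (hw j hj).le) hW fun j hj => ?_
    obtain ⟨h₀, h₁⟩ := hα j hj
    exact l1_history_le (aL1_antitone h₀.le h₁.le) (aL1_zero h₁.ne)
      fun l hl => ih l (by rw [mem_Icc] at hl; omega) (by rw [mem_Icc] at hl; omega)

theorem discrete_stability_induction
    (M N : ℕ) (hM : 1 ≤ M) (α w : ℕ → ℝ)
    (hα : ∀ j ∈ Finset.Icc 1 M, α j ∈ Set.Ioo (0 : ℝ) 1)
    (hw : ∀ j ∈ Finset.Icc 1 M, 0 < w j)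
    (x : ℕ → ℝ) (hx : ∀ n ≤ N, 0 ≤ x n)
    (hrec : ∀ n, 1 ≤ n → n ≤ N →
      x n ≤ (∑ j ∈ Finset.Icc 1 M, w j)⁻¹ *
        ∑ j ∈ Finset.Icc 1 M, w j *
          ((∑ l ∈ Finset.Icc 1 (n - 1),
              (aL1 (α j) (n - l - 1) - aL1 (α j) (n - l)) * x l) +
            aL1 (α j) (n - 1) * x 0)) :
    ∀ n ≤ N, x n ≤ x 0 :=
  discrete_stability_induction_general M N hM α w hα hw x hrec
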